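/- The generalized Petersen graph GP(n,k), with 1 ≤ k < n/2, is a 3-RDR graph if and only if n ≡ 0 (mod 6) and k ≡ ±1 (mod 6). -/

import Mathlib

open SimpleGraph Finset

/-- A `k`-rainbow dominating function on a graph `G`: whenever `f v = ∅`,
every color appears on some neighbor of `v`. -/
def IsKRDF {V : Type*} (G : SimpleGraph V) (k : ℕ) (f : V → Finset (Fin k)) : Prop :=
  ∀ v, f v = ∅ → ∀ c : Fin k, ∃ u, G.Adj v u ∧ c ∈ f u

/-- The weight of a rainbow dominating function. -/
def rdfWeight {V : Type*} [Fintype V] {k : ℕ} (f : V → Finset (Fin k)) : ℕ :=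
  ∑ v, (f v).card

/-- The `k`-rainbow domination number of `G`. -/
noncomputable def rainbowDomNum {V : Type*} [Fintype V] (G : SimpleGraph V) (k : ℕ) : ℕ :=
  sInf {w | ∃ f, IsKRDF G k f ∧ rdfWeight f = w}

/-- The generalized Petersen graph `GP(n,k)`: outer vertices `Sum.inl i`, inner
vertices `Sum.inr i`, with outer edges, spokes and inner edges. -/
def GP (n k : ℕ) : SimpleGraph (ZMod n ⊕ ZMod n) where
  Adj x y := x ≠ y ∧
    (match x, y with
     | Sum.inl i, Sum.inl j => j = i + 1 ∨ i = j + 1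
     | Sum.inl i, Sum.inr j => i = j
     | Sum.inr i, Sum.inl j => i = j
     | Sum.inr i, Sum.inr j => j = i + (k : ZMod n) ∨ i = j + (k : ZMod n))
  symm := ⟨by
    rintro (i | i) (j | j) ⟨hne, h⟩ <;>
      refine ⟨hne.symm, ?_⟩ <;> simp only at h ⊢ <;> tauto⟩
  loopless := ⟨by rintro (i | i) ⟨hne, -⟩ <;> exact hne rfl⟩

open scoped Classical in
/-- A graph is `3`-RDR if it is cubic and its `3`-rainbow domination number equals
half the number of vertices. -/
def Is3RDR {V : Type*} [Fintype V] (X : SimpleGraph V) : Prop :=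
  X.IsRegularOfDegree 3 ∧ 2 * rainbowDomNum X 3 = Fintype.card V

/-!
On a cubic graph, discharging shows `γ_r3 ≥ |V|/2`, with equality exactly when every coloured
vertex carries one colour, coloured and uncoloured vertices alternate along every edge, and the
three neighbours of each uncoloured vertex carry the three distinct colours. On `GP(n,k)` exactly
one of `u_i, v_i` is then coloured; call its colour `g i`. Alternation along the outer cycle and
the inner edges forces `n` even and `k` odd. The colouring constraints say that
`g (i-1), g i, g (i+1)` are distinct when `u_i` is uncoloured and `g (i-k), g i, g (i+k)` are
distinct otherwise, and these already force every three consecutive values of `g` to be distinct.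
So `g` is a non-constant function of `i mod 3` that separates `i` from `i + k`: hence `3 ∣ n` and
`3 ∤ k`. Conversely, for `6 ∣ n` and `k ≡ ±1 (mod 6)` the colouring `g i = -i mod 3` lifted
from `GP(6, ±1)` has weight `n`.
-/

theorem ZMod.natCast_ne_zero_of_pos_of_lt {n a : ℕ} (ha : 0 < a) (han : a < n) :
    (a : ZMod n) ≠ 0 := fun h =>
  absurd (Nat.le_of_dvd ha ((ZMod.natCast_eq_zero_iff a n).1 h)) (by omega)

section CubicGraph

variable {V : Type*} {G : SimpleGraph V} [G.LocallyFinite]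

theorem SimpleGraph.sum_sum_neighborFinset [Fintype V] {M : Type*} [AddCommMonoid M]
    (h : V → M) :
    ∑ v, ∑ u ∈ G.neighborFinset v, h u = ∑ u, G.degree u • h u := by
  classical
  have hN : ∀ v, G.neighborFinset v = univ.filter (G.Adj v) := fun v => by ext; simp
  simp_rw [hN, sum_filter]
  rw [sum_comm]
  refine sum_congr rfl fun u _ => ?_
  rw [← card_neighborFinset_eq_degree, hN, ← sum_filter, sum_const]
  simp_rw [G.adj_comm]

theorem IsKRDF.card_le_sum_card_neighborFinset {k : ℕ} {f : V → Finset (Fin k)}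
    (hf : IsKRDF G k f) {v : V} (hv : f v = ∅) : k ≤ ∑ u ∈ G.neighborFinset v, #(f u) := by
  classical
  calc k = #(univ : Finset (Fin k)) := by simp
    _ ≤ #((G.neighborFinset v).biUnion f) := card_le_card fun c _ => by
        obtain ⟨u, hu, hc⟩ := hf v hv c
        exact mem_biUnion.2 ⟨u, (mem_neighborFinset G v u).2 hu, hc⟩
    _ ≤ _ := card_biUnion_le

theorem IsKRDF.injOn_neighborSet {f : V → Finset (Fin 3)} (hreg : G.IsRegularOfDegree 3)
    (hf : IsKRDF G 3 f) {χ : V → Fin 3} (hχ : ∀ v, f v ≠ ∅ → f v = {χ v}) {v : V}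
    (hv : f v = ∅) : Set.InjOn χ (G.neighborSet v) := by
  intro u hu w hw huw
  -- `χ` maps the three neighbours of `v` onto the three colours, hence injectively
  refine inj_on_of_surj_on_of_card_le (s := G.neighborFinset v) (t := univ) (fun u _ => χ u)
    (fun _ _ => mem_univ _) (fun c _ => ?_) ?_ (by simpa using hu) (by simpa using hw) huw
  · obtain ⟨u, hvu, hc⟩ := hf v hv c
    have hne : f u ≠ ∅ := ne_empty_of_mem hc
    rw [hχ u hne, mem_singleton] at hc
    exact ⟨u, (mem_neighborFinset G v u).2 hvu, hc.symm⟩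
  · simp [card_neighborFinset_eq_degree, hreg v]

/-- Every vertex starts with charge `6 |f v|`, keeps half of it and sends `|f v|` to each of its
three neighbours; this is the charge `v` ends up with. -/
def dischargedWeight {α : Type*} (G : SimpleGraph V) [G.LocallyFinite] (f : V → Finset α)
    (v : V) : ℕ :=
  3 * #(f v) + ∑ u ∈ G.neighborFinset v, #(f u)

variable {f : V → Finset (Fin 3)}

theorem IsKRDF.three_le_dischargedWeight (hf : IsKRDF G 3 f) (v : V) :
    3 ≤ dischargedWeight G f v := by
  by_cases hv : f v = ∅
  · exact (hf.card_le_sum_card_neighborFinset hv).trans le_add_self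
  · have := card_pos.2 (nonempty_iff_ne_empty.2 hv)
    unfold dischargedWeight
    omega

variable [Fintype V]

theorem sum_dischargedWeight {m : ℕ} (hreg : G.IsRegularOfDegree 3) (f : V → Finset (Fin m)) :
    ∑ v, dischargedWeight G f v = 6 * rdfWeight f := by
  simp only [dischargedWeight, rdfWeight, sum_add_distrib, ← mul_sum, G.sum_sum_neighborFinset,
    hreg _, smul_eq_mul]
  ring

theorem IsKRDF.card_le_two_mul_rdfWeight (hreg : G.IsRegularOfDegree 3) (hf : IsKRDF G 3 f) :
    Fintype.card V ≤ 2 * rdfWeight f := by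
  have := sum_le_sum fun v (_ : v ∈ univ) => hf.three_le_dischargedWeight v
  rw [sum_dischargedWeight hreg, sum_const, card_univ, smul_eq_mul] at this
  omega

section Tight

variable (hreg : G.IsRegularOfDegree 3) (hf : IsKRDF G 3 f)
  (hw : 2 * rdfWeight f = Fintype.card V)
include hreg hf hw

theorem IsKRDF.dischargedWeight_eq_three (v : V) : dischargedWeight G f v = 3 := by
  have hsum : ∑ _v : V, 3 = ∑ v, dischargedWeight G f v := by
    rw [sum_dischargedWeight hreg, sum_const, card_univ, smul_eq_mul]
    omega
  exact ((sum_eq_sum_iff_of_le fun v _ => hf.three_le_dischargedWeight v).1 hsum v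
    (mem_univ v)).symm

theorem IsKRDF.card_le_one (v : V) : #(f v) ≤ 1 := by
  have := hf.dischargedWeight_eq_three hreg hw v
  unfold dischargedWeight at this
  omega

theorem IsKRDF.exists_eq_singleton : ∃ χ : V → Fin 3, ∀ v, f v ≠ ∅ → f v = {χ v} := by
  have (v : V) : ∃ c, f v ≠ ∅ → f v = {c} := by
    by_cases hv : f v = ∅
    · exact ⟨0, fun h => (h hv).elim⟩
    · obtain ⟨c, hc⟩ := card_eq_one.1 (le_antisymm (hf.card_le_one hreg hw v)
        (card_pos.2 (nonempty_iff_ne_empty.2 hv)))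
      exact ⟨c, fun _ => hc⟩
  choose χ hχ using this
  exact ⟨χ, hχ⟩

theorem IsKRDF.eq_empty_of_adj {u v : V} (hv : f v ≠ ∅) (huv : G.Adj v u) : f u = ∅ := by
  have hload := hf.dischargedWeight_eq_three hreg hw v
  have := card_pos.2 (nonempty_iff_ne_empty.2 hv)
  have hzero : ∑ w ∈ G.neighborFinset v, #(f w) = 0 := by
    unfold dischargedWeight at hload
    omega
  exact card_eq_zero.1 ((sum_eq_zero_iff.1 hzero) u ((mem_neighborFinset G v u).2 huv))

theorem IsKRDF.ne_empty_of_adj {u v : V} (hv : f v = ∅) (huv : G.Adj v u) : f u ≠ ∅ := by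
  intro hu
  have hlt : ∑ w ∈ G.neighborFinset v, #(f w) < ∑ _w ∈ G.neighborFinset v, 1 :=
    sum_lt_sum (fun w _ => hf.card_le_one hreg hw w)
      ⟨u, (mem_neighborFinset G v u).2 huv, by simp [hu]⟩
  have hload := hf.dischargedWeight_eq_three hreg hw v
  rw [sum_const, card_neighborFinset_eq_degree, hreg v, smul_eq_mul, mul_one] at hlt
  simp only [dischargedWeight, hv, card_empty, mul_zero, zero_add] at hload
  omega

theorem IsKRDF.eq_empty_iff_of_adj {u v : V} (huv : G.Adj u v) : f u = ∅ ↔ f v ≠ ∅ :=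
  ⟨fun hu => hf.ne_empty_of_adj hreg hw hu huv,
    fun hv => hf.eq_empty_of_adj hreg hw hv huv.symm⟩

end Tight

theorem two_mul_rainbowDomNum_eq_card_iff (hreg : G.IsRegularOfDegree 3) :
    2 * rainbowDomNum G 3 = Fintype.card V ↔
      ∃ f : V → Finset (Fin 3), IsKRDF G 3 f ∧ 2 * rdfWeight f = Fintype.card V := by
  have hne : {w | ∃ f, IsKRDF G 3 f ∧ rdfWeight f = w}.Nonempty :=
    ⟨_, fun _ => univ, fun _ hv => absurd hv univ_nonempty.ne_empty, rfl⟩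
  obtain ⟨f₀, hf₀, hw₀⟩ := Nat.sInf_mem hne
  constructor
  · intro h
    exact ⟨f₀, hf₀, by rw [hw₀]; exact h⟩
  · rintro ⟨f, hf, hw⟩
    have hle : rainbowDomNum G 3 ≤ rdfWeight f := Nat.sInf_le ⟨f, hf, rfl⟩
    have hge := hf₀.card_le_two_mul_rdfWeight hreg
    rw [hw₀] at hge
    exact le_antisymm (hw ▸ Nat.mul_le_mul_left 2 hle) hge

end CubicGraph

theorem ne_and_eq_add_or_eq_add_iff {A : Type*} [AddGroup A] {i j s : A} (hs : s ≠ 0) :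
    (i ≠ j ∧ (j = i + s ∨ i = j + s)) ↔ (j = i + s ∨ j = i - s) := by
  rw [eq_sub_iff_add_eq, eq_comm (a := i)]
  refine ⟨And.right, fun h => ⟨?_, h⟩⟩
  rintro rfl
  rcases h with h | h <;> simp_all

namespace GP

variable {n k : ℕ}

theorem adj_inl_inr {i j : ZMod n} : (GP n k).Adj (Sum.inl i) (Sum.inr j) ↔ i = j :=
  ⟨fun h => h.2, fun h => ⟨Sum.inl_ne_inr, h⟩⟩

theorem adj_inr_inl {i j : ZMod n} : (GP n k).Adj (Sum.inr i) (Sum.inl j) ↔ i = j :=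
  ⟨fun h => h.2, fun h => ⟨Sum.inr_ne_inl, h⟩⟩

theorem adj_inl_inl (h1 : (1 : ZMod n) ≠ 0) {i j : ZMod n} :
    (GP n k).Adj (Sum.inl i) (Sum.inl j) ↔ j = i + 1 ∨ j = i - 1 := by
  rw [← ne_and_eq_add_or_eq_add_iff h1, ← Sum.inl.inj_iff.ne]
  rfl

theorem adj_inr_inr (hk : (k : ZMod n) ≠ 0) {i j : ZMod n} :
    (GP n k).Adj (Sum.inr i) (Sum.inr j) ↔ j = i + k ∨ j = i - k := by
  rw [← ne_and_eq_add_or_eq_add_iff hk, ← Sum.inr.inj_iff.ne]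
  rfl

theorem neighborFinset_inl (h1 : (1 : ZMod n) ≠ 0) [(GP n k).LocallyFinite] (i : ZMod n) :
    (GP n k).neighborFinset (Sum.inl i) = {Sum.inl (i + 1), Sum.inl (i - 1), Sum.inr i} := by
  ext (j | j) <;> simp [adj_inl_inl h1, adj_inl_inr, eq_comm]

theorem neighborFinset_inr (hk : (k : ZMod n) ≠ 0) [(GP n k).LocallyFinite] (i : ZMod n) :
    (GP n k).neighborFinset (Sum.inr i) = {Sum.inr (i + k), Sum.inr (i - k), Sum.inl i} := by
  ext (j | j) <;> simp [adj_inr_inr hk, adj_inr_inl, eq_comm]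

theorem isRegularOfDegree_three (h2 : (2 : ZMod n) ≠ 0) (h2k : 2 * (k : ZMod n) ≠ 0)
    [(GP n k).LocallyFinite] : (GP n k).IsRegularOfDegree 3 := by
  have h1 : (1 : ZMod n) ≠ 0 := fun h => h2 (by rw [← one_add_one_eq_two, h, add_zero])
  have hk : (k : ZMod n) ≠ 0 := fun h => h2k (by rw [h, mul_zero])
  rintro (i | i) <;> rw [← card_neighborFinset_eq_degree]
  · rw [neighborFinset_inl h1, card_insert_of_notMem, card_pair Sum.inl_ne_inr]
    simp only [mem_insert, mem_singleton, Sum.inl.injEq, reduceCtorEq, or_false]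
    exact fun h => h2 (by linear_combination h)
  · rw [neighborFinset_inr hk, card_insert_of_notMem, card_pair Sum.inr_ne_inl]
    simp only [mem_insert, mem_singleton, Sum.inr.injEq, reduceCtorEq, or_false]
    exact fun h => h2k (by linear_combination h)

theorem isKRDF_of {m : ℕ} (h1 : (1 : ZMod n) ≠ 0) (hk : (k : ZMod n) ≠ 0)
    {f : ZMod n ⊕ ZMod n → Finset (Fin m)}
    (hout : ∀ i, f (.inl i) = ∅ → ∀ c,
      c ∈ f (.inl (i + 1)) ∨ c ∈ f (.inl (i - 1)) ∨ c ∈ f (.inr i))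
    (hin : ∀ i, f (.inr i) = ∅ → ∀ c,
      c ∈ f (.inr (i + k)) ∨ c ∈ f (.inr (i - k)) ∨ c ∈ f (.inl i)) :
    IsKRDF (GP n k) m f := by
  rintro (i | i) hv c
  · rcases hout i hv c with h | h | h
    exacts [⟨_, (adj_inl_inl h1).2 (.inl rfl), h⟩, ⟨_, (adj_inl_inl h1).2 (.inr rfl), h⟩,
      ⟨_, adj_inl_inr.2 rfl, h⟩]
  · rcases hin i hv c with h | h | h
    exacts [⟨_, (adj_inr_inr hk).2 (.inl rfl), h⟩, ⟨_, (adj_inr_inr hk).2 (.inr rfl), h⟩,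
      ⟨_, adj_inr_inl.2 rfl, h⟩]

theorem rdfWeight_eq_sum {m : ℕ} [NeZero n] (f : ZMod n ⊕ ZMod n → Finset (Fin m)) :
    rdfWeight f = ∑ i, (#(f (.inl i)) + #(f (.inr i))) := by
  rw [rdfWeight, Fintype.sum_sum_type, sum_add_distrib]

end GP

theorem fin_three_eq_of_nodup_of_ne :
    ∀ a b c d : Fin 3, [a, b, c].Nodup → d ≠ a → d ≠ c → d = b := by decide

theorem fin_three_eq_of_nodup_of_nodup :
    ∀ a b c d : Fin 3, [a, b, c].Nodup → [b, c, d].Nodup → d = a := by decide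

/-- The combinatorial shadow of a 3-rainbow dominating function of weight `n` on `GP(n,k)`:
`E i` says that the outer vertex `u_i` is uncoloured, and `g i` is the colour of whichever of
`u_i, v_i` is coloured. -/
structure GPLabelling (n k : ℕ) where
  E : ZMod n → Prop
  g : ZMod n → Fin 3
  E_add_one : ∀ i, E (i + 1) ↔ ¬E i
  E_add_k : ∀ i, E (i + k) ↔ ¬E i
  nodup_outer : ∀ i, E i → [g (i - 1), g i, g (i + 1)].Nodup
  nodup_inner : ∀ i, ¬E i → [g (i - k), g i, g (i + k)].Nodup

namespace GPLabelling

variable {n k : ℕ} (L : GPLabelling n k)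
include L

theorem E_sub_one (i : ZMod n) : L.E (i - 1) ↔ ¬L.E i := by
  rw [← not_iff_not, not_not, ← L.E_add_one, sub_add_cancel]

theorem E_sub_k (i : ZMod n) : L.E (i - k) ↔ ¬L.E i := by
  rw [← not_iff_not, not_not, ← L.E_add_k, sub_add_cancel]

theorem E_add_natCast (j : ℕ) (i : ZMod n) : L.E (i + j) ↔ (L.E i ↔ Even j) := by
  induction j with
  | zero => simp
  | succ j ih =>
    rw [Nat.cast_succ, ← add_assoc, L.E_add_one, ih, Nat.even_add_one]
    tauto

theorem even_n : Even n := by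
  have := L.E_add_natCast n 0
  rw [ZMod.natCast_self, add_zero] at this
  tauto

theorem odd_k : Odd k := by
  have h₁ := L.E_add_natCast k 0
  have h₂ := L.E_add_k 0
  rw [zero_add] at h₁ h₂
  rw [← Nat.not_even_iff_odd]
  tauto

theorem g_ne_of_not_E {j : ZMod n} (hj : ¬L.E j) :
    L.g (j - k) ≠ L.g j ∧ L.g (j + k) ≠ L.g j ∧ L.g (j - k) ≠ L.g (j + k) := by
  have := L.nodup_inner j hj
  simp only [List.nodup_cons, List.mem_cons, List.not_mem_nil] at this
  tauto

theorem g_eq_of_ne {o : ZMod n} {y : Fin 3} (ho : L.E o) (h₁ : y ≠ L.g (o - 1))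
    (h₂ : y ≠ L.g (o + 1)) : y = L.g o :=
  fin_three_eq_of_nodup_of_ne _ _ _ _ (L.nodup_outer o ho) h₁ h₂

/-- If `g (i-1) = g (i+1)` where `u_i` is coloured, the constraints at `u_{i+k}` and `u_{i-k}`
force this colour onto both `g (i+k)` and `g (i-k)`, contradicting the constraint at `v_i`. -/
theorem nodup_consecutive (i : ZMod n) : [L.g (i - 1), L.g i, L.g (i + 1)].Nodup := by
  by_cases hi : L.E i
  · exact L.nodup_outer i hi
  have hl : L.E (i - 1) := (L.E_sub_one i).2 hi
  have hr : L.E (i + 1) := (L.E_add_one i).2 hi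
  have hne : L.g (i - 1) ≠ L.g (i + 1) := by
    intro heq
    have hplus : L.g (i - 1) = L.g (i + k) := by
      refine L.g_eq_of_ne ((L.E_add_k i).2 hi) ?_ ?_
      · have := (L.g_ne_of_not_E (j := i - 1 + k) (by rwa [L.E_add_k, not_not])).1
        rwa [add_sub_cancel_right, ← add_sub_right_comm] at this
      · have := (L.g_ne_of_not_E (j := i + 1 + k) (by rwa [L.E_add_k, not_not])).1
        rwa [add_sub_cancel_right, ← heq, add_right_comm] at this
    have hminus : L.g (i - 1) = L.g (i - k) := by
      refine L.g_eq_of_ne ((L.E_sub_k i).2 hi) ?_ ?_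
      · have := (L.g_ne_of_not_E (j := i - 1 - k) (by rwa [L.E_sub_k, not_not])).2.1
        rwa [sub_add_cancel, sub_right_comm] at this
      · have := (L.g_ne_of_not_E (j := i + 1 - k) (by rwa [L.E_sub_k, not_not])).2.1
        rw [sub_add_eq_add_sub]
        rwa [sub_add_cancel, ← heq] at this
    exact (L.g_ne_of_not_E hi).2.2 (by rw [← hminus, hplus])
  have h₁ := L.nodup_outer _ hl
  have h₂ := L.nodup_outer _ hr
  rw [sub_add_cancel] at h₁
  rw [add_sub_cancel_right] at h₂
  simp only [List.nodup_cons, List.mem_cons, List.not_mem_nil] at h₁ h₂ ⊢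
  tauto

theorem periodic_g : Function.Periodic L.g 3 := fun i => by
  have h₁ := L.nodup_consecutive (i + 1)
  have h₂ := L.nodup_consecutive (i + 2)
  rw [add_sub_cancel_right, add_assoc, one_add_one_eq_two] at h₁
  rw [show i + 2 - 1 = i + 1 by ring, add_assoc, two_add_one_eq_three] at h₂
  exact fin_three_eq_of_nodup_of_nodup _ _ _ _ h₁ h₂

theorem three_dvd_n : 3 ∣ n := by
  by_contra h
  have h₀ := L.nodup_consecutive 1
  rw [sub_self, one_add_one_eq_two] at h₀
  have hn : ((n % 3 + n / 3 * 3 : ℕ) : ZMod n) = 0 := by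
    rw [Nat.mod_add_div']
    exact ZMod.natCast_self n
  push_cast at hn
  have hr : L.g ((n % 3 : ℕ) : ZMod n) = L.g 0 := by
    rw [← L.periodic_g.nat_mul (n / 3), hn]
  have : n % 3 = 1 ∨ n % 3 = 2 := by omega
  simp only [List.nodup_cons, List.mem_cons, List.not_mem_nil, not_or] at h₀
  rcases this with h3 | h3 <;> simp only [h3, Nat.cast_one, Nat.cast_ofNat] at hr
  exacts [h₀.1.1 hr.symm, h₀.1.2.1 hr.symm]

theorem not_three_dvd_k : ¬3 ∣ k := by
  rintro ⟨q, hq⟩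
  have hper : Function.Periodic L.g k := by
    have := L.periodic_g.nat_mul q
    rwa [show ((q : ℕ) : ZMod n) * 3 = k by rw [hq]; push_cast; ring] at this
  obtain ⟨i, hi⟩ : ∃ i, ¬L.E i := by
    by_cases h : L.E 0
    · exact ⟨0 + 1, by rwa [L.E_add_one, not_not]⟩
    · exact ⟨0, h⟩
  exact (L.g_ne_of_not_E hi).2.1 (hper i)

theorem mod_six : n % 6 = 0 ∧ (k % 6 = 1 ∨ k % 6 = 5) := by
  have h2n := even_iff_two_dvd.1 L.even_n
  have h2k := L.odd_k
  rw [Nat.odd_iff] at h2k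
  have h3n := L.three_dvd_n
  have h3k := L.not_three_dvd_k
  omega

end GPLabelling

namespace GP

variable {n k : ℕ} [NeZero n]

theorem nonempty_labelling (h2 : (2 : ZMod n) ≠ 0) (h2k : 2 * (k : ZMod n) ≠ 0)
    {f : ZMod n ⊕ ZMod n → Finset (Fin 3)} (hf : IsKRDF (GP n k) 3 f)
    (hw : 2 * rdfWeight f = Fintype.card (ZMod n ⊕ ZMod n)) : Nonempty (GPLabelling n k) := by
  classical
  have h1 : (1 : ZMod n) ≠ 0 := fun h => h2 (by rw [← one_add_one_eq_two, h, add_zero])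
  have hk : (k : ZMod n) ≠ 0 := fun h => h2k (by rw [h, mul_zero])
  have hreg := isRegularOfDegree_three h2 h2k
  obtain ⟨χ, hχ⟩ := hf.exists_eq_singleton hreg hw
  have hadj {u v} (huv : (GP n k).Adj u v) := hf.eq_empty_iff_of_adj hreg hw huv
  have hspoke (i : ZMod n) : f (.inr i) = ∅ ↔ f (.inl i) ≠ ∅ := hadj (adj_inr_inl.2 rfl)
  have hrainbow {v} (hv : f v = ∅) {l : List (ZMod n ⊕ ZMod n)}
      (hl : ∀ x ∈ l, (GP n k).Adj v x) (hnd : l.Nodup) : (l.map χ).Nodup :=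
    hnd.map_on fun x hx y hy => hf.injOn_neighborSet hreg hχ hv (hl x hx) (hl y hy)
  refine ⟨{
    E := fun i => f (.inl i) = ∅
    g := fun i => χ (if f (.inl i) = ∅ then .inr i else .inl i)
    E_add_one := fun i => hadj ((adj_inl_inl h1).2 (Or.inr (by ring)))
    E_add_k := fun i => by
      have := hadj (u := .inr (i + k)) (v := .inr i) ((adj_inr_inr hk).2 (Or.inr (by ring)))
      have := hspoke i
      have := hspoke (i + k)
      tauto
    nodup_outer := fun i hi => ?_
    nodup_inner := fun i hi => ?_ }⟩
  · have hl := (hadj ((adj_inl_inl h1).2 (Or.inr rfl))).1 hi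
    have hr := (hadj ((adj_inl_inl h1).2 (Or.inl rfl))).1 hi
    simp only [if_pos hi, if_neg hl, if_neg hr]
    refine hrainbow hi (l := [.inl (i - 1), .inr i, .inl (i + 1)])
      (by simp [adj_inl_inl h1, adj_inl_inr]) ?_
    simp [show i - 1 ≠ i + 1 from fun h => h2 (by linear_combination -h)]
  · have hv := (hspoke i).2 hi
    have hl := not_not.1 ((hspoke _).2.mt ((hadj ((adj_inr_inr hk).2 (Or.inr rfl))).1 hv))
    have hr := not_not.1 ((hspoke _).2.mt ((hadj ((adj_inr_inr hk).2 (Or.inl rfl))).1 hv))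
    simp only [if_neg hi, if_pos hl, if_pos hr]
    refine hrainbow hv (l := [.inr (i - k), .inl i, .inr (i + k)])
      (by simp [adj_inr_inr hk, adj_inr_inl]) ?_
    simp [show i - k ≠ i + k from fun h => h2k (by linear_combination -h)]

/-- The colouring `g i = -i mod 3`, put on `u_i` for even `i` and on `v_i` for odd `i`. -/
def outerPattern : ZMod 6 → Finset (Fin 3) := ![{0}, ∅, {1}, ∅, {2}, ∅]

def innerPattern : ZMod 6 → Finset (Fin 3) := ![∅, {2}, ∅, {0}, ∅, {1}]

theorem outerPattern_cover : ∀ z : ZMod 6, outerPattern z = ∅ → ∀ c,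
    c ∈ outerPattern (z + 1) ∨ c ∈ outerPattern (z - 1) ∨ c ∈ innerPattern z := by
  decide

theorem innerPattern_cover :
    ∀ z κ : ZMod 6, (κ = 1 ∨ κ = 5) → innerPattern z = ∅ → ∀ c,
      c ∈ innerPattern (z + κ) ∨ c ∈ innerPattern (z - κ) ∨ c ∈ outerPattern z := by
  decide

theorem card_outerPattern_add_card_innerPattern :
    ∀ z : ZMod 6, #(outerPattern z) + #(innerPattern z) = 1 := by
  decide

theorem exists_isKRDF_of_six_dvd (h6 : 6 ∣ n) (hk6 : k % 6 = 1 ∨ k % 6 = 5) :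
    ∃ f : ZMod n ⊕ ZMod n → Finset (Fin 3),
      IsKRDF (GP n k) 3 f ∧ 2 * rdfWeight f = Fintype.card (ZMod n ⊕ ZMod n) := by
  let φ := ZMod.castHom h6 (ZMod 6)
  have hκ : (k : ZMod 6) = 1 ∨ (k : ZMod 6) = 5 := by
    rw [← ZMod.natCast_mod]
    rcases hk6 with h | h <;> rw [h] <;> decide
  have h1 : (1 : ZMod n) ≠ 0 := fun h =>
    absurd (congrArg φ h) (by rw [map_one, map_zero]; decide)
  have hk : (k : ZMod n) ≠ 0 := fun h => by
    have := congrArg φ h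
    rw [map_natCast, map_zero] at this
    rcases hκ with h | h <;> rw [h] at this <;> exact absurd this (by decide)
  refine ⟨Sum.elim (outerPattern ∘ φ) (innerPattern ∘ φ), isKRDF_of h1 hk ?_ ?_, ?_⟩
  · intro i hi c
    simpa [map_add, map_sub, map_one] using outerPattern_cover (φ i) hi c
  · intro i hi c
    simpa [map_add, map_sub, map_natCast] using innerPattern_cover (φ i) k hκ hi c
  · simp only [rdfWeight_eq_sum, Sum.elim_inl, Sum.elim_inr, Function.comp_apply,
      card_outerPattern_add_card_innerPattern, sum_const, card_univ, smul_eq_mul, mul_one,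
      Fintype.card_sum, ZMod.card]
    ring

end GP

/-- Žerovnik's criterion: `GP(n,k)` with `1 ≤ k < n/2` is `3`-RDR iff
`n ≡ 0 (mod 6)` and `k ≡ ±1 (mod 6)`. -/
theorem GP_is3RDR_iff (n k : ℕ) [NeZero n] (hk1 : 1 ≤ k) (hk2 : 2 * k < n) :
    Is3RDR (GP n k) ↔ (n % 6 = 0 ∧ (k % 6 = 1 ∨ k % 6 = 5)) := by
  have h2 : (2 : ZMod n) ≠ 0 := by
    exact_mod_cast ZMod.natCast_ne_zero_of_pos_of_lt two_pos (by omega)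
  have h2k : 2 * (k : ZMod n) ≠ 0 := by
    exact_mod_cast ZMod.natCast_ne_zero_of_pos_of_lt (by omega : 0 < 2 * k) hk2
  classical
  have hreg := GP.isRegularOfDegree_three h2 h2k
  rw [Is3RDR, and_iff_right hreg, two_mul_rainbowDomNum_eq_card_iff hreg]
  constructor
  · rintro ⟨f, hf, hw⟩
    exact (GP.nonempty_labelling h2 h2k hf hw).some.mod_six
  · rintro ⟨h6, hk6⟩
    exact GP.exists_isKRDF_of_six_dvd (Nat.dvd_of_mod_eq_zero h6) hk6
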